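/- The set of coinvariants {x ∈ O_q(B⁺) : η⁺(x) = x ⊗ 1} equals the subalgebra O_q(N⁺)′ generated by the elements X_{ij}X_{jj}⁻¹ (1 ≤ i < j ≤ n+1); likewise {x ∈ O_q(B⁻) : η⁻(x) = x ⊗ 1} equals the subalgebra O_q(N⁻)′ generated by the elements X_{ji}X_{ii}⁻¹ (1 ≤ i < j ≤ n+1). -/

import Mathlib

open scoped TensorProduct

noncomputable section

namespace QSL

/-- The generator `X i j` of the free algebra underlying `O_q(SL_{n+1})`. -/
def Xf (k : Type) [Field k] (n : ℕ) (i j : Fin (n+1)) :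
    FreeAlgebra k (Fin (n+1) × Fin (n+1)) :=
  FreeAlgebra.ι k (i, j)

/-- The number of inversions (the length `ℓ(σ)`) of a permutation. -/
def invCount {m : ℕ} (σ : Equiv.Perm (Fin m)) : ℕ :=
  (Finset.univ.filter (fun p : Fin m × Fin m => p.1 < p.2 ∧ σ p.2 < σ p.1)).card

/-- The quantum determinant `∑_σ (-q)^{ℓ(σ)} X_{1σ(1)} ⋯ X_{n+1,σ(n+1)}`. -/
def qdet (k : Type) [Field k] (q : k) (n : ℕ) : FreeAlgebra k (Fin (n+1) × Fin (n+1)) :=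
  ∑ σ : Equiv.Perm (Fin (n+1)),
    ((-q) ^ invCount σ) • (List.ofFn fun i => Xf k n i (σ i)).prod

/-- Defining relations of `O_q(SL_{n+1})`. -/
inductive SLRel (k : Type) [Field k] (q : k) (n : ℕ) :
    FreeAlgebra k (Fin (n+1) × Fin (n+1)) → FreeAlgebra k (Fin (n+1) × Fin (n+1)) → Prop
  | row {i j m : Fin (n+1)} (h : j < m) :
      SLRel k q n (Xf k n i j * Xf k n i m) (q • (Xf k n i m * Xf k n i j))
  | col {i l j : Fin (n+1)} (h : i < l) :
      SLRel k q n (Xf k n i j * Xf k n l j) (q • (Xf k n l j * Xf k n i j))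
  | swap {i l j m : Fin (n+1)} (h1 : i < l) (h2 : m < j) :
      SLRel k q n (Xf k n i j * Xf k n l m) (Xf k n l m * Xf k n i j)
  | mixed {i l j m : Fin (n+1)} (h1 : i < l) (h2 : j < m) :
      SLRel k q n (Xf k n i j * Xf k n l m)
        (Xf k n l m * Xf k n i j + (q - q⁻¹) • (Xf k n i m * Xf k n l j))
  | det : SLRel k q n (qdet k q n) 1

/-- The quantized coordinate ring `O_q(SL_{n+1})`. -/
abbrev OqSL (k : Type) [Field k] (q : k) (n : ℕ) := RingQuot (SLRel k q n)

/-- The generator `X i j` of `O_q(SL_{n+1})`. -/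
def XSL (k : Type) [Field k] (q : k) (n : ℕ) (i j : Fin (n+1)) : OqSL k q n :=
  RingQuot.mkAlgHom k (SLRel k q n) (Xf k n i j)

/-- Relations `X i j = 0` for `i > j`, defining `O_q(B⁺)`. -/
inductive BpRel (k : Type) [Field k] (q : k) (n : ℕ) : OqSL k q n → OqSL k q n → Prop
  | zero {i j : Fin (n+1)} (h : j < i) : BpRel k q n (XSL k q n i j) 0

/-- Relations `X i j = 0` for `i < j`, defining `O_q(B⁻)`. -/
inductive BmRel (k : Type) [Field k] (q : k) (n : ℕ) : OqSL k q n → OqSL k q n → Prop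
  | zero {i j : Fin (n+1)} (h : i < j) : BmRel k q n (XSL k q n i j) 0

/-- Relations `X i j = 0` for `i ≠ j`, defining `O_q(T)`. -/
inductive TRel (k : Type) [Field k] (q : k) (n : ℕ) : OqSL k q n → OqSL k q n → Prop
  | zero {i j : Fin (n+1)} (h : i ≠ j) : TRel k q n (XSL k q n i j) 0

/-- The quantized coordinate ring `O_q(B⁺)` of the positive Borel. -/
abbrev OqBp (k : Type) [Field k] (q : k) (n : ℕ) := RingQuot (BpRel k q n)

/-- The quantized coordinate ring `O_q(B⁻)` of the negative Borel. -/
abbrev OqBm (k : Type) [Field k] (q : k) (n : ℕ) := RingQuot (BmRel k q n)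

/-- The quantized coordinate ring `O_q(T)` of the maximal torus. -/
abbrev OqT (k : Type) [Field k] (q : k) (n : ℕ) := RingQuot (TRel k q n)

/-- The coset of `X i j` in `O_q(B⁺)`. -/
def XBp (k : Type) [Field k] (q : k) (n : ℕ) (i j : Fin (n+1)) : OqBp k q n :=
  RingQuot.mkAlgHom k (BpRel k q n) (XSL k q n i j)

/-- The coset of `X i j` in `O_q(B⁻)`. -/
def XBm (k : Type) [Field k] (q : k) (n : ℕ) (i j : Fin (n+1)) : OqBm k q n :=
  RingQuot.mkAlgHom k (BmRel k q n) (XSL k q n i j)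

/-- The coset `Y i i` of `X i i` in `O_q(T)`. -/
def YT (k : Type) [Field k] (q : k) (n : ℕ) (i : Fin (n+1)) : OqT k q n :=
  RingQuot.mkAlgHom k (TRel k q n) (XSL k q n i i)

/-- `y i j = X_{ii}⁻¹ X_{ij}` in `O_q(B⁺)`. -/
def yY (k : Type) [Field k] (q : k) (n : ℕ) (i j : Fin (n+1)) : OqBp k q n :=
  Ring.inverse (XBp k q n i i) * XBp k q n i j

/-- `z i j = X_{ij} X_{jj}⁻¹` in `O_q(B⁺)`. -/
def zZ (k : Type) [Field k] (q : k) (n : ℕ) (i j : Fin (n+1)) : OqBp k q n :=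
  XBp k q n i j * Ring.inverse (XBp k q n j j)

/-- The subalgebra `O_q(N⁺)` of `O_q(B⁺)`, generated by the `X_{ii}⁻¹X_{ij}`, `i < j`. -/
def OqNp (k : Type) [Field k] (q : k) (n : ℕ) : Subalgebra k (OqBp k q n) :=
  Algebra.adjoin k {a | ∃ i j : Fin (n+1), i < j ∧ a = yY k q n i j}

/-- The subalgebra `O_q(N⁺)'` of `O_q(B⁺)`, generated by the `X_{ij}X_{jj}⁻¹`, `i < j`. -/
def OqNp' (k : Type) [Field k] (q : k) (n : ℕ) : Subalgebra k (OqBp k q n) :=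
  Algebra.adjoin k {a | ∃ i j : Fin (n+1), i < j ∧ a = zZ k q n i j}

/-- `X_{jj}⁻¹ X_{ji}` in `O_q(B⁻)` (for `i < j`). -/
def yNm (k : Type) [Field k] (q : k) (n : ℕ) (i j : Fin (n+1)) : OqBm k q n :=
  Ring.inverse (XBm k q n j j) * XBm k q n j i

/-- `X_{ji} X_{ii}⁻¹` in `O_q(B⁻)` (for `i < j`). -/
def zNm (k : Type) [Field k] (q : k) (n : ℕ) (i j : Fin (n+1)) : OqBm k q n :=
  XBm k q n j i * Ring.inverse (XBm k q n i i)

/-- The subalgebra `O_q(N⁻)` of `O_q(B⁻)`, generated by the `X_{jj}⁻¹X_{ji}`, `i < j`. -/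
def OqNm (k : Type) [Field k] (q : k) (n : ℕ) : Subalgebra k (OqBm k q n) :=
  Algebra.adjoin k {a | ∃ i j : Fin (n+1), i < j ∧ a = yNm k q n i j}

/-- The subalgebra `O_q(N⁻)'` of `O_q(B⁻)`, generated by the `X_{ji}X_{ii}⁻¹`, `i < j`. -/
def OqNm' (k : Type) [Field k] (q : k) (n : ℕ) : Subalgebra k (OqBm k q n) :=
  Algebra.adjoin k {a | ∃ i j : Fin (n+1), i < j ∧ a = zNm k q n i j}

end QSL

/-!
The coinvariants form a subalgebra containing every `X_{ij} X_{jj}⁻¹`, because `η` multiplies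
`X_{ij}` and `X_{jj}` by the same `Y_{jj}`. Conversely, each diagonal generator `q`-commutes with
every generator, so every word in the generators factors as `u X_{c₁c₁} ⋯ X_{cₘcₘ}` with `u` in
`O_q(N)'`, and `η` multiplies it by `Y_{c₁c₁} ⋯ Y_{cₘcₘ}`. Since the `X_{ii}` commute and have
product `1`, `Y_{ii} ↦ [X_{ii}]` defines an algebra map from `O_q(T)` to the monoid algebra of
`O_q(B)`; composing with the coefficient of `[1]` gives a functional `φ`. Now `id ⊗ φ` applied to
`η(a) = a ⊗ 1` returns `a`, while on a word it returns `0` unless `X_{c₁c₁} ⋯ X_{cₘcₘ} = 1`, in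
which case it returns `u`. Hence every coinvariant lies in `O_q(N)'`.
-/

open QSL Algebra

section Coinvariants

variable {k A B ι κ : Type*} [CommSemiring k] [Semiring A] [Algebra k A] [Semiring B] [Algebra k B]

theorem unit_mul_mul_inv_mem_adjoin {s : Set A} (u : Aˣ)
    (hs : ∀ x ∈ s, ∃ μ : k, ↑u * x = μ • (x * ↑u)) {v : A} (hv : v ∈ adjoin k s) :
    ↑u * v * ↑u⁻¹ ∈ adjoin k s := by
  let conj := MulSemiringAction.toAlgHom k A (ConjAct.toConjAct u)
  have hconj : ∀ x, conj x = ↑u * x * ↑u⁻¹ := fun x => ConjAct.units_smul_def _ x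
  have hmap : (adjoin k s).map conj ≤ adjoin k s := by
    rw [AlgHom.map_adjoin, adjoin_le_iff]
    rintro _ ⟨x, hx, rfl⟩
    obtain ⟨μ, hμ⟩ := hs x hx
    rw [SetLike.mem_coe, hconj, hμ, smul_mul_assoc, Units.mul_inv_cancel_right]
    exact Subalgebra.smul_mem _ (subset_adjoin hx) μ
  rw [← hconj]
  exact hmap ⟨v, hv, rfl⟩

theorem map_mul_inv_eq_tmul_one (η : A →ₐ[k] A ⊗[k] B) {a : A} {u : Aˣ} {y : B}
    (ha : η a = a ⊗ₜ y) (hu : η u = ↑u ⊗ₜ y) : η (a * ↑u⁻¹) = (a * ↑u⁻¹) ⊗ₜ 1 := by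
  let U := Units.map (η : A →* A ⊗[k] B) u
  have hU : (U : A ⊗[k] B) = ↑u ⊗ₜ y := hu
  have hU' : η ↑u⁻¹ = ↑U⁻¹ := (Units.coe_map_inv _ u).symm
  rw [map_mul, hU', Units.mul_inv_eq_iff_eq_mul, ha, hU,
    Algebra.TensorProduct.tmul_mul_tmul, Units.inv_mul_cancel_right, one_mul]

variable {η : A →ₐ[k] A ⊗[k] B} {g : ι → A} {col : ι → κ} {d : κ → Aˣ} {Y : κ → B}

theorem exists_mem_mul_prod_of_mem_closure (N : Subalgebra k A)
    (hgN : ∀ i, g i * ↑(d (col i))⁻¹ ∈ N) (hdN : ∀ c, ∀ v ∈ N, ↑(d c) * v * ↑(d c)⁻¹ ∈ N)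
    (hη : ∀ i, η (g i) = g i ⊗ₜ Y (col i)) {a : A} (ha : a ∈ Submonoid.closure (Set.range g)) :
    ∃ v ∈ N, ∃ L : List κ,
      a = v * (L.map fun c => (d c : A)).prod ∧ η a = a ⊗ₜ (L.map Y).prod := by
  induction ha using Submonoid.closure_induction_left with
  | one => exact ⟨1, one_mem N, [], by simp, by simp [Algebra.TensorProduct.one_def]⟩
  | mul_left x hx a _ ih =>
    obtain ⟨i, rfl⟩ := hx
    obtain ⟨v, hv, L, rfl, hηa⟩ := ih
    refine ⟨g i * ↑(d (col i))⁻¹ * (↑(d (col i)) * v * ↑(d (col i))⁻¹),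
      mul_mem (hgN i) (hdN _ v hv), col i :: L, ?_, ?_⟩
    · simp only [List.map_cons, List.prod_cons, mul_assoc, Units.inv_mul_cancel_left]
    · rw [map_mul, hη, hηa, Algebra.TensorProduct.tmul_mul_tmul, List.map_cons, List.prod_cons]

theorem coinvariants_eq_adjoin (hgen : adjoin k (Set.range g) = ⊤)
    (hη : ∀ i, η (g i) = g i ⊗ₜ Y (col i)) (hηd : ∀ c, η (d c) = ↑(d c) ⊗ₜ Y c)
    (hcomm : ∀ c c', Commute (d c : A) (d c'))
    (hconj : ∀ c i, ∃ μ : k, ↑(d c) * g i = μ • (g i * ↑(d c)))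
    (Θ : B →ₐ[k] MonoidAlgebra k A) (hΘ : ∀ c, Θ (Y c) = MonoidAlgebra.of k A (d c)) :
    {a | η a = a ⊗ₜ 1} = (adjoin k (Set.range fun i => g i * ↑(d (col i))⁻¹) : Set A) := by
  set N := adjoin k (Set.range fun i => g i * ↑(d (col i))⁻¹)
  have hgN : ∀ i, g i * ↑(d (col i))⁻¹ ∈ N := fun i => subset_adjoin ⟨i, rfl⟩
  have hdN : ∀ c, ∀ v ∈ N, ↑(d c) * v * ↑(d c)⁻¹ ∈ N := by
    refine fun c v hv => unit_mul_mul_inv_mem_adjoin (d c) ?_ hv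
    rintro _ ⟨i, rfl⟩
    obtain ⟨μ, hμ⟩ := hconj c i
    refine ⟨μ, ?_⟩
    rw [← mul_assoc, hμ, smul_mul_assoc, mul_assoc, mul_assoc,
      ((hcomm c (col i)).units_inv_right).eq]
  have hNcoinv : N ≤ AlgHom.equalizer η Algebra.TensorProduct.includeLeft := by
    refine adjoin_le ?_
    rintro _ ⟨i, rfl⟩
    exact map_mul_inv_eq_tmul_one η (hη i) (hηd _)
  let φ : B →ₗ[k] k :=
    Finsupp.lapply 1 ∘ₗ (MonoidAlgebra.coeffLinearEquiv k).toLinearMap ∘ₗ Θ.toLinearMap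
  let P : A →ₗ[k] A := TensorProduct.rid k A ∘ₗ LinearMap.lTensor A φ ∘ₗ η.toLinearMap
  have hP : ∀ a, η a = a ⊗ₜ 1 → P a = a := fun a ha => by
    simp [P, φ, ha]
  have hPN : ∀ a, P a ∈ N := by
    suffices h : Submodule.span k (Submonoid.closure (Set.range g) : Set A) ≤
        (Subalgebra.toSubmodule N).comap P by
      intro a
      rw [← adjoin_eq_span, hgen] at h
      exact h trivial
    rw [Submodule.span_le]
    intro a ha
    obtain ⟨v, hv, L, rfl, hηa⟩ := exists_mem_mul_prod_of_mem_closure N hgN hdN hη ha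
    have hΘL : Θ (L.map Y).prod = MonoidAlgebra.of k A (L.map fun c => (d c : A)).prod := by
      rw [map_list_prod, map_list_prod, List.map_map, List.map_map]
      exact congrArg _ (List.map_congr_left fun c _ => hΘ c)
    have hPa : P (v * (L.map fun c => (d c : A)).prod) =
        φ (L.map Y).prod • (v * (L.map fun c => (d c : A)).prod) := by
      simp [P, hηa]
    rw [SetLike.mem_coe, Submodule.mem_comap, hPa]
    by_cases hL : (L.map fun c => (d c : A)).prod = 1
    · have hφ : φ (L.map Y).prod = 1 := by simp [φ, hΘL, hL]
      simpa [hφ, hL] using hv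
    · have hφ : φ (L.map Y).prod = 0 := by simp [φ, hΘL, Ne.symm hL]
      simp [hφ]
  ext a
  exact ⟨fun ha => hP a ha ▸ hPN a, fun ha => hNcoinv ha⟩

end Coinvariants

theorem Equiv.Perm.exists_apply_lt_of_ne_one {m : ℕ} {σ : Equiv.Perm (Fin m)} (hσ : σ ≠ 1) :
    ∃ i, σ i < i := by
  by_contra! hle
  obtain ⟨j, hj⟩ : ∃ j, σ j ≠ j := by
    by_contra! hfix
    exact hσ (Equiv.ext hfix)
  have hlt := Finset.sum_lt_sum (s := Finset.univ) (f := fun i : Fin m => (i : ℕ))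
    (g := fun i => (σ i : ℕ)) (fun i _ => hle i) ⟨j, Finset.mem_univ j, (hle j).lt_of_ne hj.symm⟩
  rw [Equiv.sum_comp σ (fun i => (i : ℕ))] at hlt
  exact lt_irrefl _ hlt

theorem Equiv.Perm.exists_lt_apply_of_ne_one {m : ℕ} {σ : Equiv.Perm (Fin m)} (hσ : σ ≠ 1) :
    ∃ i, i < σ i := by
  obtain ⟨i, hi⟩ := exists_apply_lt_of_ne_one (inv_ne_one.mpr hσ)
  exact ⟨σ⁻¹ i, by simpa using hi⟩

theorem invCount_one {m : ℕ} : invCount (1 : Equiv.Perm (Fin m)) = 0 := by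
  rw [invCount, Finset.card_eq_zero, Finset.filter_eq_empty_iff]
  exact fun p _ h => lt_asymm h.1 h.2

theorem sum_perm_eq_prod_diag {k C : Type*} [CommSemiring k] [Semiring C] [Module k C]
    {m : ℕ} (c : k) (x : Fin m → Fin m → C)
    (h : ∀ σ : Equiv.Perm (Fin m), σ ≠ 1 → ∃ i, x i (σ i) = 0) :
    ∑ σ : Equiv.Perm (Fin m), c ^ invCount σ • (List.ofFn fun i => x i (σ i)).prod =
      (List.ofFn fun i => x i i).prod := by
  rw [Fintype.sum_eq_single 1 fun σ hσ => ?_]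
  · simp [invCount_one]
  · obtain ⟨i, hi⟩ := h σ hσ
    rw [List.prod_eq_zero (List.mem_ofFn.mpr ⟨i, hi⟩), smul_zero]

theorem isUnit_of_isUnit_ofFn_prod {M : Type*} [Monoid M] {m : ℕ} {x : Fin m → M}
    (hx : ∀ i j, Commute (x i) (x j)) (h : IsUnit (List.ofFn x).prod) (i : Fin m) :
    IsUnit (x i) := by
  induction m with
  | zero => exact i.elim0
  | succ m ih =>
    rw [List.ofFn_succ, List.prod_cons] at h
    have hcomm : Commute (x 0) (List.ofFn fun j => x j.succ).prod :=
      Commute.list_prod_right _ _ fun y hy => by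
        obtain ⟨j, rfl⟩ := List.mem_ofFn.mp hy
        exact hx _ _
    obtain ⟨h0, hrest⟩ := hcomm.isUnit_mul_iff.mp h
    cases i using Fin.cases with
    | zero => exact h0
    | succ i => exact ih (fun a b => hx _ _) hrest i

section Generation

variable {R A B ι : Type*} [CommSemiring R] [Semiring A] [Algebra R A] [Semiring B] [Algebra R B]

theorem adjoin_range_comp_eq_top {g : ι → A} (hg : adjoin R (Set.range g) = ⊤) (f : A →ₐ[R] B)
    (hf : Function.Surjective f) : adjoin R (Set.range (f ∘ g)) = ⊤ := by
  rw [Set.range_comp, ← AlgHom.map_adjoin, hg, Algebra.map_top, AlgHom.range_eq_top]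
  exact hf

theorem adjoin_eq_of_subset_of_subset_insert_zero_one {s t : Set A} (hst : s ⊆ t)
    (hts : t ⊆ insert 0 (insert 1 s)) : adjoin R t = adjoin R s := by
  refine le_antisymm (adjoin_le fun a ha => ?_) (adjoin_mono hst)
  rcases hts ha with rfl | rfl | ha
  · exact zero_mem _
  · exact one_mem _
  · exact subset_adjoin ha

end Generation

section Relations

variable {k : Type} [Field k] {q : k} {n : ℕ} {A : Type*} [Semiring A] [Algebra k A]
  (f : OqSL k q n →ₐ[k] A)

theorem map_XSL_of_rel {a b : FreeAlgebra k (Fin (n+1) × Fin (n+1))} (h : SLRel k q n a b) :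
    f (RingQuot.mkAlgHom k (SLRel k q n) a) = f (RingQuot.mkAlgHom k (SLRel k q n) b) :=
  congrArg f (RingQuot.mkAlgHom_rel k h)

theorem map_XSL_row {i j m : Fin (n+1)} (h : j < m) :
    f (XSL k q n i j) * f (XSL k q n i m) = q • (f (XSL k q n i m) * f (XSL k q n i j)) := by
  simpa [XSL] using map_XSL_of_rel f (SLRel.row (i := i) h)

theorem map_XSL_col {i l j : Fin (n+1)} (h : i < l) :
    f (XSL k q n i j) * f (XSL k q n l j) = q • (f (XSL k q n l j) * f (XSL k q n i j)) := by
  simpa [XSL] using map_XSL_of_rel f (SLRel.col (j := j) h)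

theorem map_XSL_swap {i l j m : Fin (n+1)} (h1 : i < l) (h2 : m < j) :
    f (XSL k q n i j) * f (XSL k q n l m) = f (XSL k q n l m) * f (XSL k q n i j) := by
  simpa [XSL] using map_XSL_of_rel f (SLRel.swap h1 h2)

theorem map_XSL_mixed {i l j m : Fin (n+1)} (h1 : i < l) (h2 : j < m) :
    f (XSL k q n i j) * f (XSL k q n l m) =
      f (XSL k q n l m) * f (XSL k q n i j) +
        (q - q⁻¹) • (f (XSL k q n i m) * f (XSL k q n l j)) := by
  simpa [XSL] using map_XSL_of_rel f (SLRel.mixed h1 h2)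

theorem map_qdet {C : Type*} [Semiring C] [Algebra k C]
    (F : FreeAlgebra k (Fin (n+1) × Fin (n+1)) →ₐ[k] C) :
    F (qdet k q n) = ∑ σ : Equiv.Perm (Fin (n+1)),
      (-q) ^ invCount σ • (List.ofFn fun i => F (Xf k n i (σ i))).prod := by
  simp [qdet, map_list_prod, List.map_ofFn, Function.comp_def]

theorem map_XSL_det :
    ∑ σ : Equiv.Perm (Fin (n+1)),
      (-q) ^ invCount σ • (List.ofFn fun i => f (XSL k q n i (σ i))).prod = 1 := by
  have h := map_XSL_of_rel f (SLRel.det (k := k) (q := q) (n := n))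
  rw [map_one, map_one] at h
  change (f.comp (RingQuot.mkAlgHom k (SLRel k q n))) (qdet k q n) = 1 at h
  rwa [map_qdet] at h

end Relations

theorem adjoin_range_XSL (k : Type) [Field k] (q : k) (n : ℕ) :
    adjoin k (Set.range fun p : Fin (n+1) × Fin (n+1) => XSL k q n p.1 p.2) = ⊤ :=
  adjoin_range_comp_eq_top (FreeAlgebra.adjoin_range_ι k _) _ (RingQuot.mkAlgHom_surjective k _)

section Torus

variable {k : Type} [Field k] {q : k} {n : ℕ} {C : Type*} [Semiring C] [Algebra k C]
  (t : Fin (n+1) → C)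

def diagFreeLift : FreeAlgebra k (Fin (n+1) × Fin (n+1)) →ₐ[k] C :=
  FreeAlgebra.lift k fun p => if p.1 = p.2 then t p.1 else 0

theorem diagFreeLift_Xf (i j : Fin (n+1)) :
    diagFreeLift t (Xf k n i j) = if i = j then t i else 0 :=
  FreeAlgebra.lift_ι_apply _ _

variable {t}

theorem diagFreeLift_rel (hcomm : ∀ i j, Commute (t i) (t j)) (hprod : (List.ofFn t).prod = 1)
    {a b : FreeAlgebra k (Fin (n+1) × Fin (n+1))} (h : SLRel k q n a b) :
    diagFreeLift t a = diagFreeLift t b := by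
  induction h with
  | row | col | swap | mixed =>
    simp only [map_mul, map_add, map_smul, diagFreeLift_Xf]
    split_ifs <;> first | order | simp_all [(hcomm _ _).eq]
  | det =>
    rw [map_one, map_qdet, sum_perm_eq_prod_diag (-q) (fun i j => diagFreeLift t (Xf k n i j))]
    · simpa [diagFreeLift_Xf] using hprod
    · intro σ hσ
      obtain ⟨i, hi⟩ := Equiv.Perm.exists_apply_lt_of_ne_one hσ
      exact ⟨i, by simp [diagFreeLift_Xf, hi.ne']⟩

def torusLift (hcomm : ∀ i j, Commute (t i) (t j)) (hprod : (List.ofFn t).prod = 1) :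
    OqT k q n →ₐ[k] C :=
  RingQuot.liftAlgHom k
    ⟨RingQuot.liftAlgHom k ⟨diagFreeLift t, fun _ _ => diagFreeLift_rel hcomm hprod⟩,
      by rintro _ _ ⟨h⟩; simp [XSL, diagFreeLift_Xf, h]⟩

theorem torusLift_YT (hcomm : ∀ i j, Commute (t i) (t j)) (hprod : (List.ofFn t).prod = 1)
    (i : Fin (n+1)) : torusLift hcomm hprod (YT k q n i) = t i := by
  simp [torusLift, YT, XSL, diagFreeLift_Xf]

end Torus

section Triangular

/- The hypotheses `hul` (an entry above the diagonal times one below it vanishes) and `hdet` (every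
non-identity term of the quantum determinant vanishes) hold in both `O_q(B⁺)` and `O_q(B⁻)`. -/

variable {k : Type} [Field k] {q : k} {n : ℕ} {A : Type*} [Semiring A] [Algebra k A]
  (f : OqSL k q n →ₐ[k] A)

theorem commute_map_XSL_diag
    (hul : ∀ i j l m, i < j → m < l → f (XSL k q n i j) * f (XSL k q n l m) = 0)
    (i j : Fin (n+1)) : Commute (f (XSL k q n i i)) (f (XSL k q n j j)) := by
  have key : ∀ a b, a < b → Commute (f (XSL k q n a a)) (f (XSL k q n b b)) := fun a b hab => by
    have h := map_XSL_mixed f hab hab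
    rwa [hul a b b a hab hab, smul_zero, add_zero] at h
  rcases lt_trichotomy i j with h | rfl | h
  · exact key i j h
  · exact Commute.refl _
  · exact (key j i h).symm

theorem ofFn_map_XSL_diag_prod
    (hdet : ∀ σ : Equiv.Perm (Fin (n+1)), σ ≠ 1 → ∃ i, f (XSL k q n i (σ i)) = 0) :
    (List.ofFn fun i => f (XSL k q n i i)).prod = 1 := by
  rw [← sum_perm_eq_prod_diag (-q) (fun i j => f (XSL k q n i j)) hdet, map_XSL_det]

theorem isUnit_map_XSL_diag
    (hul : ∀ i j l m, i < j → m < l → f (XSL k q n i j) * f (XSL k q n l m) = 0)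
    (hdet : ∀ σ : Equiv.Perm (Fin (n+1)), σ ≠ 1 → ∃ i, f (XSL k q n i (σ i)) = 0)
    (i : Fin (n+1)) : IsUnit (f (XSL k q n i i)) :=
  isUnit_of_isUnit_ofFn_prod (commute_map_XSL_diag f hul)
    (ofFn_map_XSL_diag_prod f hdet ▸ isUnit_one) i

theorem exists_map_XSL_diag_mul_eq_smul (hq0 : q ≠ 0)
    (hul : ∀ i j l m, i < j → m < l → f (XSL k q n i j) * f (XSL k q n l m) = 0)
    (j r c : Fin (n+1)) : ∃ μ : k,
      f (XSL k q n j j) * f (XSL k q n r c) = μ • (f (XSL k q n r c) * f (XSL k q n j j)) := by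
  have swap_inv : ∀ {a b : A}, b * a = q • (a * b) → a * b = q⁻¹ • (b * a) := fun h => by
    rw [h, smul_smul, inv_mul_cancel₀ hq0, one_smul]
  rcases lt_trichotomy j r with hjr | rfl | hrj <;> rcases lt_trichotomy j c with hjc | rfl | hcj
  · refine ⟨1, ?_⟩
    rw [one_smul, map_XSL_mixed f hjr hjc, hul j c r j hjc hjr, smul_zero, add_zero]
  · exact ⟨q, map_XSL_col f hjr⟩
  · exact ⟨1, by rw [one_smul, map_XSL_swap f hjr hcj]⟩
  · exact ⟨q, map_XSL_row f hjc⟩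
  · exact ⟨1, (one_smul k _).symm⟩
  · exact ⟨q⁻¹, swap_inv (map_XSL_row f hcj)⟩
  · exact ⟨1, by rw [one_smul, map_XSL_swap f hrj hjc]⟩
  · exact ⟨q⁻¹, swap_inv (map_XSL_col f hrj)⟩
  · refine ⟨1, ?_⟩
    rw [one_smul, map_XSL_mixed f hrj hcj, hul r j j c hrj hcj, smul_zero, add_zero]

theorem coinvariants_eq_adjoin_of_triangular (hq0 : q ≠ 0) (f : OqSL k q n →ₐ[k] A)
    (hf : Function.Surjective f)
    (hul : ∀ i j l m, i < j → m < l → f (XSL k q n i j) * f (XSL k q n l m) = 0)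
    (hdet : ∀ σ : Equiv.Perm (Fin (n+1)), σ ≠ 1 → ∃ i, f (XSL k q n i (σ i)) = 0)
    (η : A →ₐ[k] A ⊗[k] OqT k q n)
    (hη : ∀ r c, η (f (XSL k q n r c)) = f (XSL k q n r c) ⊗ₜ YT k q n c) :
    {a | η a = a ⊗ₜ 1} = (adjoin k (Set.range fun p : Fin (n+1) × Fin (n+1) =>
      f (XSL k q n p.1 p.2) * Ring.inverse (f (XSL k q n p.2 p.2))) : Set A) := by
  let d c := (isUnit_map_XSL_diag f hul hdet c).unit
  let t c := MonoidAlgebra.of k A (f (XSL k q n c c))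
  have hcomm : ∀ i j, Commute (t i) (t j) := fun i j =>
    (commute_map_XSL_diag f hul i j).map (MonoidAlgebra.of k A)
  have hprod : (List.ofFn t).prod = 1 := by
    have ht : List.ofFn t = (List.ofFn fun c => f (XSL k q n c c)).map (MonoidAlgebra.of k A) := by
      rw [List.map_ofFn]
      rfl
    rw [ht, ← map_list_prod, ofFn_map_XSL_diag_prod f hdet, map_one]
  have hinv : ∀ c, Ring.inverse (f (XSL k q n c c)) = ↑(d c)⁻¹ := fun c => Ring.inverse_unit (d c)
  simp_rw [hinv]
  exact coinvariants_eq_adjoin (η := η) (Y := YT k q n) (d := d) (col := Prod.snd)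
    (g := fun p : Fin (n+1) × Fin (n+1) => f (XSL k q n p.1 p.2))
    (adjoin_range_comp_eq_top (adjoin_range_XSL k q n) f hf) (fun p => hη p.1 p.2)
    (fun c => hη c c) (commute_map_XSL_diag f hul)
    (fun c p => exists_map_XSL_diag_mul_eq_smul f hq0 hul c p.1 p.2)
    (torusLift hcomm hprod) (torusLift_YT hcomm hprod)

end Triangular

section Borel

variable {k : Type} [Field k] {q : k} {n : ℕ}

theorem XBp_eq_zero {i j : Fin (n+1)} (h : j < i) : XBp k q n i j = 0 :=
  (RingQuot.mkAlgHom_rel k (BpRel.zero h)).trans (map_zero _)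

theorem XBp_mul_XBp_eq_zero {i j l m : Fin (n+1)} (hml : m < l) :
    XBp k q n i j * XBp k q n l m = 0 := by
  rw [XBp_eq_zero hml, mul_zero]

theorem exists_XBp_eq_zero {σ : Equiv.Perm (Fin (n+1))} (hσ : σ ≠ 1) :
    ∃ i, XBp k q n i (σ i) = 0 := by
  obtain ⟨i, hi⟩ := Equiv.Perm.exists_apply_lt_of_ne_one hσ
  exact ⟨i, XBp_eq_zero hi⟩

theorem adjoin_XBp_mul_inverse_eq_OqNp' :
    adjoin k (Set.range fun p : Fin (n+1) × Fin (n+1) =>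
      XBp k q n p.1 p.2 * Ring.inverse (XBp k q n p.2 p.2)) = OqNp' k q n := by
  refine adjoin_eq_of_subset_of_subset_insert_zero_one ?_ ?_
  · rintro _ ⟨i, j, -, rfl⟩
    exact ⟨(i, j), rfl⟩
  · rintro _ ⟨⟨r, c⟩, rfl⟩
    rcases lt_trichotomy r c with h | rfl | h
    · exact Or.inr (Or.inr ⟨r, c, h, rfl⟩)
    · refine Or.inr (Or.inl (Ring.mul_inverse_cancel _ ?_))
      exact isUnit_map_XSL_diag (RingQuot.mkAlgHom k (BpRel k q n))
        (fun _ _ _ _ _ => XBp_mul_XBp_eq_zero) (fun _ => exists_XBp_eq_zero) r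
    · exact Or.inl (by simp [XBp_eq_zero h])

theorem coinvariants_OqBp (hq0 : q ≠ 0) (η : OqBp k q n →ₐ[k] OqBp k q n ⊗[k] OqT k q n)
    (hη : ∀ i j, i ≤ j → η (XBp k q n i j) = XBp k q n i j ⊗ₜ YT k q n j) :
    {x | η x = x ⊗ₜ 1} = (OqNp' k q n : Set (OqBp k q n)) := by
  rw [← adjoin_XBp_mul_inverse_eq_OqNp']
  refine coinvariants_eq_adjoin_of_triangular hq0 (RingQuot.mkAlgHom k (BpRel k q n))
    (RingQuot.mkAlgHom_surjective k _) (fun _ _ _ _ _ => XBp_mul_XBp_eq_zero)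
    (fun _ => exists_XBp_eq_zero) η fun r c => ?_
  rcases le_or_gt r c with h | h
  · exact hη r c h
  · change η (XBp k q n r c) = XBp k q n r c ⊗ₜ YT k q n c
    rw [XBp_eq_zero h, map_zero, TensorProduct.zero_tmul]

theorem XBm_eq_zero {i j : Fin (n+1)} (h : i < j) : XBm k q n i j = 0 :=
  (RingQuot.mkAlgHom_rel k (BmRel.zero h)).trans (map_zero _)

theorem XBm_mul_XBm_eq_zero {i j l m : Fin (n+1)} (hij : i < j) :
    XBm k q n i j * XBm k q n l m = 0 := by
  rw [XBm_eq_zero hij, zero_mul]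

theorem exists_XBm_eq_zero {σ : Equiv.Perm (Fin (n+1))} (hσ : σ ≠ 1) :
    ∃ i, XBm k q n i (σ i) = 0 := by
  obtain ⟨i, hi⟩ := Equiv.Perm.exists_lt_apply_of_ne_one hσ
  exact ⟨i, XBm_eq_zero hi⟩

theorem adjoin_XBm_mul_inverse_eq_OqNm' :
    adjoin k (Set.range fun p : Fin (n+1) × Fin (n+1) =>
      XBm k q n p.1 p.2 * Ring.inverse (XBm k q n p.2 p.2)) = OqNm' k q n := by
  refine adjoin_eq_of_subset_of_subset_insert_zero_one ?_ ?_
  · rintro _ ⟨i, j, -, rfl⟩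
    exact ⟨(j, i), rfl⟩
  · rintro _ ⟨⟨r, c⟩, rfl⟩
    rcases lt_trichotomy c r with h | rfl | h
    · exact Or.inr (Or.inr ⟨c, r, h, rfl⟩)
    · refine Or.inr (Or.inl (Ring.mul_inverse_cancel _ ?_))
      exact isUnit_map_XSL_diag (RingQuot.mkAlgHom k (BmRel k q n))
        (fun _ _ _ _ hij _ => XBm_mul_XBm_eq_zero hij) (fun _ => exists_XBm_eq_zero) c
    · exact Or.inl (by simp [XBm_eq_zero h])

theorem coinvariants_OqBm (hq0 : q ≠ 0) (η : OqBm k q n →ₐ[k] OqBm k q n ⊗[k] OqT k q n)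
    (hη : ∀ i j, j ≤ i → η (XBm k q n i j) = XBm k q n i j ⊗ₜ YT k q n j) :
    {x | η x = x ⊗ₜ 1} = (OqNm' k q n : Set (OqBm k q n)) := by
  rw [← adjoin_XBm_mul_inverse_eq_OqNm']
  refine coinvariants_eq_adjoin_of_triangular hq0 (RingQuot.mkAlgHom k (BmRel k q n))
    (RingQuot.mkAlgHom_surjective k _) (fun _ _ _ _ hij _ => XBm_mul_XBm_eq_zero hij)
    (fun _ => exists_XBm_eq_zero) η fun r c => ?_
  rcases le_or_gt c r with h | h
  · exact hη r c h
  · change η (XBm k q n r c) = XBm k q n r c ⊗ₜ YT k q n c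
    rw [XBm_eq_zero h, map_zero, TensorProduct.zero_tmul]

end Borel

open QSL in
theorem eta_coinvariants_general (k : Type) [Field k] (q : k) (hq0 : q ≠ 0)
    (n : ℕ) :
    (∀ ηp : OqBp k q n →ₐ[k] OqBp k q n ⊗[k] OqT k q n,
      (∀ i j : Fin (n+1), i ≤ j → ηp (XBp k q n i j) = XBp k q n i j ⊗ₜ[k] YT k q n j) →
      {x : OqBp k q n | ηp x = x ⊗ₜ[k] 1} = (OqNp' k q n : Set (OqBp k q n))) ∧
    (∀ ηm : OqBm k q n →ₐ[k] OqBm k q n ⊗[k] OqT k q n,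
      (∀ i j : Fin (n+1), j ≤ i → ηm (XBm k q n i j) = XBm k q n i j ⊗ₜ[k] YT k q n j) →
      {x : OqBm k q n | ηm x = x ⊗ₜ[k] 1} = (OqNm' k q n : Set (OqBm k q n))) :=
  ⟨coinvariants_OqBp hq0, coinvariants_OqBm hq0⟩

open QSL in
/-- The coinvariants of the right coactions `η±` are exactly `O_q(N±)'`. -/
theorem eta_coinvariants (k : Type) [Field k] (q : k) (hq0 : q ≠ 0)
    (hq : ∀ m : ℕ, 0 < m → q ^ m ≠ 1) (n : ℕ) (hn : 1 ≤ n) :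
    (∀ ηp : OqBp k q n →ₐ[k] OqBp k q n ⊗[k] OqT k q n,
      (∀ i j : Fin (n+1), i ≤ j → ηp (XBp k q n i j) = XBp k q n i j ⊗ₜ[k] YT k q n j) →
      {x : OqBp k q n | ηp x = x ⊗ₜ[k] 1} = (OqNp' k q n : Set (OqBp k q n))) ∧
    (∀ ηm : OqBm k q n →ₐ[k] OqBm k q n ⊗[k] OqT k q n,
      (∀ i j : Fin (n+1), j ≤ i → ηm (XBm k q n i j) = XBm k q n i j ⊗ₜ[k] YT k q n j) →
      {x : OqBm k q n | ηm x = x ⊗ₜ[k] 1} = (OqNm' k q n : Set (OqBm k q n))) :=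
  eta_coinvariants_general k q hq0 n
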